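/- (Lemma 1, existence and uniqueness of the decomposition) Suppose R contains no self-rules (no rules of the form (p, v, p, k_p)), and suppose (P \ {o}) × V_0 ⊆ k_0 where V_0 = Knowledge(k_0). Then for every n ≥ 0 there exists a unique set X_n ⊆ V such that f_R^n(k_0) = ((P \ {o}) × V_0) ∪ ({o} × X_n). -/

import Mathlib

open scoped Classical

/-- A communication rule `(p_b, v, p_a, k_a)`. -/
abbrev Rule (P V : Type*) := P × V × P × Set (P × V)

/-- The knowledge-update operator
`f_R(k) = k ∪ {(p_a, v) : ∃ p_b k_a, (p_b, v) ∈ k, k_a ⊆ k, (p_b, v, p_a, k_a) ∈ R}`. -/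
def fR {P V : Type*} (R : Set (Rule P V)) (k : Set (P × V)) : Set (P × V) :=
  k ∪ {pv | ∃ pb ka, (pb, pv.2) ∈ k ∧ ka ⊆ k ∧ (pb, pv.2, pv.1, ka) ∈ R}

/-- `Knowledge(k) = {v : (p, v) ∈ k for some p}`. -/
def Knowledge {P V : Type*} (k : Set (P × V)) : Set V := {v | ∃ p, (p, v) ∈ k}

/-- The maximal state of knowledge `f*_R(k₀) = ⋃ₙ f_R^n(k₀)`. -/
def fStar {P V : Type*} (R : Set (Rule P V)) (k0 : Set (P × V)) : Set (P × V) :=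
  ⋃ n, (fR R)^[n] k0

/-- `R(k₀)`: the rules applicable to the initial knowledge. -/
def Rres {P V : Type*} (R : Set (Rule P V)) (k0 : Set (P × V)) : Set (Rule P V) :=
  {r ∈ R | r.2.1 ∈ Knowledge k0 ∧ ∀ v, (r.2.2.1, v) ∈ r.2.2.2 → v ∈ Knowledge k0}

/-- `X → x`: there is an applicable rule `(p, x, o, k_σ) ∈ R(k₀)` with `p ≠ o`
and `X = {v : (o, v) ∈ k_σ}`. -/
def arrow {P V : Type*} (R : Set (Rule P V)) (k0 : Set (P × V)) (o : P)
    (X : Set V) (x : V) : Prop :=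
  ∃ p kσ, p ≠ o ∧ (p, x, o, kσ) ∈ Rres R k0 ∧ X = {v | (o, v) ∈ kσ}

/-- The adversary-projection operator `g_{R,k₀}(X) = X ∪ {x : ∃ X_σ ⊆ X, X_σ → x}`. -/
def gR {P V : Type*} (R : Set (Rule P V)) (k0 : Set (P × V)) (o : P)
    (X : Set V) : Set V :=
  X ∪ {x | ∃ Xσ, Xσ ⊆ X ∧ arrow R k0 o Xσ x}

/-!
Each application of `f_R` only adds pairs `(p_a, v)` with `v` already known to some principal, so
every iterate `f_R^n(k₀)` contains `k₀ ⊇ (P \ {o}) × V₀` and has knowledge exactly `V₀`. Such a set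
is `(P \ {o}) × V₀` together with its slice over `o`, and that slice is the only possible `X_n`
because the first part contributes nothing over `o`.
-/

section Decomposition

variable {P V : Type*}

lemma subset_fR (R : Set (Rule P V)) (k : Set (P × V)) : k ⊆ fR R k :=
  Set.subset_union_left

lemma subset_fR_iterate (R : Set (Rule P V)) (k : Set (P × V)) (n : ℕ) : k ⊆ (fR R)^[n] k :=
  Function.id_le_iterate_of_id_le (subset_fR R) n k

lemma knowledge_fR (R : Set (Rule P V)) (k : Set (P × V)) : Knowledge (fR R k) = Knowledge k := by
  refine Set.Subset.antisymm ?_ fun v ⟨p, hp⟩ => ⟨p, subset_fR R k hp⟩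
  rintro v ⟨p, hp | ⟨pb, -, hpb, -, -⟩⟩
  exacts [⟨p, hp⟩, ⟨pb, hpb⟩]

lemma knowledge_fR_iterate (R : Set (Rule P V)) (k : Set (P × V)) (n : ℕ) :
    Knowledge ((fR R)^[n] k) = Knowledge k := by
  induction n with
  | zero => rfl
  | succ n ih => rw [Function.iterate_succ_apply', knowledge_fR, ih]

lemma eq_compl_prod_union_singleton_prod {s : Set (P × V)} {K : Set V} {o : P}
    (hK : Knowledge s ⊆ K) (hs : ({o}ᶜ : Set P) ×ˢ K ⊆ s) :
    s = (({o}ᶜ : Set P) ×ˢ K) ∪ (({o} : Set P) ×ˢ {v | (o, v) ∈ s}) := by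
  ext ⟨p, v⟩
  by_cases hp : p = o
  · subst hp
    simp
  · exact ⟨fun h => Or.inl ⟨hp, hK ⟨p, h⟩⟩, by rintro (h | ⟨rfl, h⟩); exacts [hs h, h]⟩

lemma compl_prod_union_singleton_prod_injective (K : Set V) (o : P) :
    Function.Injective fun X : Set V => (({o}ᶜ : Set P) ×ˢ K) ∪ (({o} : Set P) ×ˢ X) := by
  intro X Y hXY
  ext v
  simpa using Set.ext_iff.mp hXY (o, v)

end Decomposition

theorem decomposition_exists_unique_general {P V : Type*} (R : Set (Rule P V))
    (k0 : Set (P × V)) (o : P)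
    (hhon : (({o}ᶜ : Set P) ×ˢ Knowledge k0) ⊆ k0) :
    ∀ n : ℕ, ∃! Xn : Set V,
      (fR R)^[n] k0 = (({o}ᶜ : Set P) ×ˢ Knowledge k0) ∪ (({o} : Set P) ×ˢ Xn) := by
  intro n
  have hdecomp := eq_compl_prod_union_singleton_prod (knowledge_fR_iterate R k0 n).le
    (hhon.trans (subset_fR_iterate R k0 n))
  simp_rw [eq_comm (a := (fR R)^[n] k0)]
  exact (compl_prod_union_singleton_prod_injective _ o).existsUnique_of_mem_range ⟨_, hdecomp.symm⟩

/-- Lemma 1, existence and uniqueness of the decomposition. -/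
theorem decomposition_exists_unique {P V : Type*} (R : Set (Rule P V))
    (k0 : Set (P × V)) (o : P)
    (hself : ∀ (p : P) (v : V) (kp : Set (P × V)), (p, v, p, kp) ∉ R)
    (hhon : (({o}ᶜ : Set P) ×ˢ Knowledge k0) ⊆ k0) :
    ∀ n : ℕ, ∃! Xn : Set V,
      (fR R)^[n] k0 = (({o}ᶜ : Set P) ×ˢ Knowledge k0) ∪ (({o} : Set P) ×ˢ Xn) :=
  decomposition_exists_unique_general R k0 o hhon
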